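/- With the notation of the constrained least-squares problem (G full column rank, β = (GᴴG)^{−1}Gᴴy, Ψ = Z(GᴴG)^{−1}Zᴴ invertible), the minimum value of ‖Gx − y‖² over {x : Zx = 0} equals ‖Gβ − y‖² + (Zβ)ᴴ Ψ^{−1} (Zβ). -/

import Mathlib

/-!
The residual `Gβ - y` of the unconstrained least-squares solution is orthogonal to the range
of `G` (normal equations), and `x* - β = -d` with `d = (GᴴG)⁻¹ZᴴΨ⁻¹Zβ`, so by Pythagoras
`‖Gx* - y‖² = ‖Gβ - y‖² + ‖Gd‖²`. Finally `‖Gd‖² = dᴴ(GᴴG)d = dᴴZᴴΨ⁻¹Zβ = (Zd)ᴴΨ⁻¹Zβ`,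
and `Zd = ΨΨ⁻¹Zβ = Zβ`.
-/

open Matrix

namespace Matrix

variable {α : Type*} {l n p : Type*} [Fintype l] [Fintype n] [Fintype p]

theorem star_mulVec_dotProduct [NonUnitalSemiring α] [StarRing α]
    (A : Matrix l n α) (v : n → α) (w : l → α) :
    star (A *ᵥ v) ⬝ᵥ w = star v ⬝ᵥ (Aᴴ *ᵥ w) := by
  rw [star_mulVec, dotProduct_mulVec]

theorem star_sub_dotProduct_sub_of_star_dotProduct_eq_zero [NonUnitalRing α] [StarRing α]
    (u w : n → α) (h : star w ⬝ᵥ u = 0) :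
    star (u - w) ⬝ᵥ (u - w) = star u ⬝ᵥ u + star w ⬝ᵥ w := by
  have h' : star u ⬝ᵥ w = 0 := by rw [star_dotProduct, h, star_zero]
  simp only [star_sub, sub_dotProduct, dotProduct_sub, h, h']
  abel

theorem ofReal_sum_norm_sq_eq_star_dotProduct (v : n → ℂ) :
    ((∑ i, ‖v i‖ ^ 2 : ℝ) : ℂ) = star v ⬝ᵥ v := by
  push_cast
  exact Finset.sum_congr rfl fun i _ => (Complex.conj_mul' (v i)).symm

section CommRing

variable [CommRing α] [StarRing α] [DecidableEq n] [DecidableEq p]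

theorem conjTranspose_mulVec_leastSquares_residual {G : Matrix l n α}
    (hG : IsUnit (Gᴴ * G).det) (y : l → α) :
    Gᴴ *ᵥ (G *ᵥ (((Gᴴ * G)⁻¹ * Gᴴ) *ᵥ y) - y) = 0 := by
  rw [mulVec_sub, mulVec_mulVec, mulVec_mulVec, ← Matrix.mul_assoc,
    mul_nonsing_inv _ hG, Matrix.one_mul, sub_self]

/-- The matrix `A⁻¹Zᴴ(ZA⁻¹Zᴴ)⁻¹Z`; for `A = GᴴG` it maps the unconstrained least-squares
solution `β` to `β - x*`. -/
noncomputable def constraintCorrection (A : Matrix n n α) (Z : Matrix p n α) : Matrix n n α :=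
  A⁻¹ * Zᴴ * (Z * A⁻¹ * Zᴴ)⁻¹ * Z

variable {A : Matrix n n α} {Z : Matrix p n α}

theorem mulVec_constraintCorrection_mulVec (hΨ : IsUnit (Z * A⁻¹ * Zᴴ).det) (v : n → α) :
    Z *ᵥ (constraintCorrection A Z *ᵥ v) = Z *ᵥ v := by
  rw [constraintCorrection, mulVec_mulVec, ← Matrix.mul_assoc, ← Matrix.mul_assoc,
    ← Matrix.mul_assoc, mul_nonsing_inv _ hΨ, Matrix.one_mul]

theorem mul_constraintCorrection (hA : IsUnit A.det) :
    A * constraintCorrection A Z = Zᴴ * (Z * A⁻¹ * Zᴴ)⁻¹ * Z := by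
  simp only [constraintCorrection, ← Matrix.mul_assoc, mul_nonsing_inv _ hA, Matrix.one_mul]

theorem star_constraintCorrection_dotProduct (hA : IsUnit A.det)
    (hΨ : IsUnit (Z * A⁻¹ * Zᴴ).det) (v : n → α) :
    star (constraintCorrection A Z *ᵥ v) ⬝ᵥ (A *ᵥ (constraintCorrection A Z *ᵥ v)) =
      star (Z *ᵥ v) ⬝ᵥ ((Z * A⁻¹ * Zᴴ)⁻¹ *ᵥ (Z *ᵥ v)) := by
  rw [mulVec_mulVec, mul_constraintCorrection hA, ← mulVec_mulVec, ← mulVec_mulVec,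
    ← star_mulVec_dotProduct, mulVec_constraintCorrection_mulVec hΨ]

end CommRing

end Matrix

theorem constrained_least_squares_min_value_general (L N P : ℕ)
    (G : Matrix (Fin L) (Fin N) ℂ) (Z : Matrix (Fin P) (Fin N) ℂ)
    (y : Fin L → ℂ)
    (hGdet : IsUnit (Gᴴ * G).det)
    (hΨ : IsUnit (Z * (Gᴴ * G)⁻¹ * Zᴴ).det)
    (β : Fin N → ℂ) (hβ : β = ((Gᴴ * G)⁻¹ * Gᴴ).mulVec y)
    (xstar : Fin N → ℂ)
    (hxstar : xstar = β -
      ((Gᴴ * G)⁻¹ * Zᴴ * (Z * (Gᴴ * G)⁻¹ * Zᴴ)⁻¹ * Z).mulVec β) :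
    ((∑ i, ‖(G.mulVec xstar - y) i‖ ^ 2 : ℝ) : ℂ) =
      ((∑ i, ‖(G.mulVec β - y) i‖ ^ 2 : ℝ) : ℂ) +
        star (Z.mulVec β) ⬝ᵥ ((Z * (Gᴴ * G)⁻¹ * Zᴴ)⁻¹).mulVec (Z.mulVec β) := by
  set d := constraintCorrection (Gᴴ * G) Z *ᵥ β
  have hres : Gᴴ *ᵥ (G *ᵥ β - y) = 0 := hβ ▸ conjTranspose_mulVec_leastSquares_residual hGdet y
  have hdecomp : G *ᵥ xstar - y = (G *ᵥ β - y) - G *ᵥ d := by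
    rw [show xstar = β - d from hxstar, mulVec_sub]
    abel
  have horth : star (G *ᵥ d) ⬝ᵥ (G *ᵥ β - y) = 0 := by
    rw [star_mulVec_dotProduct, hres, dotProduct_zero]
  rw [hdecomp, ofReal_sum_norm_sq_eq_star_dotProduct, ofReal_sum_norm_sq_eq_star_dotProduct,
    star_sub_dotProduct_sub_of_star_dotProduct_eq_zero _ _ horth, star_mulVec_dotProduct,
    mulVec_mulVec, star_constraintCorrection_dotProduct hGdet hΨ]

/-- The minimum value of the equality-constrained least-squares problem:
with `β = (GᴴG)⁻¹Gᴴy`, `Ψ = Z(GᴴG)⁻¹Zᴴ` invertible, and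
`x* = β - (GᴴG)⁻¹ZᴴΨ⁻¹Zβ` the constrained minimizer,
`‖Gx* - y‖² = ‖Gβ - y‖² + (Zβ)ᴴ Ψ⁻¹ (Zβ)`. -/
theorem constrained_least_squares_min_value (L N P : ℕ)
    (G : Matrix (Fin L) (Fin N) ℂ) (Z : Matrix (Fin P) (Fin N) ℂ)
    (y : Fin L → ℂ)
    (hrank : ∀ x : Fin N → ℂ, G.mulVec x = 0 → x = 0)
    (hGdet : IsUnit (Gᴴ * G).det)
    (hΨ : IsUnit (Z * (Gᴴ * G)⁻¹ * Zᴴ).det)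
    (β : Fin N → ℂ) (hβ : β = ((Gᴴ * G)⁻¹ * Gᴴ).mulVec y)
    (xstar : Fin N → ℂ)
    (hxstar : xstar = β -
      ((Gᴴ * G)⁻¹ * Zᴴ * (Z * (Gᴴ * G)⁻¹ * Zᴴ)⁻¹ * Z).mulVec β) :
    ((∑ i, ‖(G.mulVec xstar - y) i‖ ^ 2 : ℝ) : ℂ) =
      ((∑ i, ‖(G.mulVec β - y) i‖ ^ 2 : ℝ) : ℂ) +
        star (Z.mulVec β) ⬝ᵥ ((Z * (Gᴴ * G)⁻¹ * Zᴴ)⁻¹).mulVec (Z.mulVec β) :=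
  constrained_least_squares_min_value_general L N P G Z y hGdet hΨ β hβ xstar hxstar
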